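/- arXiv:2311.00918 — 4 statements merged into one kernel-verified Lean document; each statement's English description precedes it below -/
import Mathlib

section
/- Let β > 0, r > 0, ε > 0 and d ≥ 1, and let A be a bounded operator on ℓ²(ℤ²,ℂᵈ) with |A(x,y)| ≤ e^{−2β|x−y|} for all x,y ∈ ℤ², and moreover |A(x,y)| ≤ ε for all x,y ∈ B_{2r}(0). Then for all x,y ∈ B_{2r}(0): |[A, Λ₁](x,y)| ≤ ε^{1/2} · e^{−β|x₁| − β|y₁| − β|x₂−y₂|}. -/
open scoped ENNReal

noncomputable section

/-- Sites of the lattice `ℤ²`. -/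
abbrev Site : Type := ℤ × ℤ

/-- The `ℓ¹`-distance on `ℤ²`. -/
def dist1 (x y : Site) : ℝ := |(x.1 : ℝ) - (y.1 : ℝ)| + |(x.2 : ℝ) - (y.2 : ℝ)|

/-- The `ℓ¹`-norm on `ℤ²`. -/
def norm1 (x : Site) : ℝ := |(x.1 : ℝ)| + |(x.2 : ℝ)|

/-- The (closed) `ℓ¹`-ball of radius `r` centered at `x` in `ℤ²`. -/
def ball1 (x : Site) (r : ℝ) : Set Site := {y | dist1 y x ≤ r}

/-- The fiber `ℂᵈ`. -/
abbrev Fib (d : ℕ) := EuclideanSpace ℂ (Fin d)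

/-- The Hilbert space `ℓ²(ℤ², ℂᵈ)`. -/
abbrev L2 (d : ℕ) := lp (fun _ : Site => Fib d) 2

/-- Bounded operators on `ℓ²(ℤ², ℂᵈ)`. -/
abbrev Op (d : ℕ) := L2 d →L[ℂ] L2 d

/-- The kernel `A(x,y) : ℂᵈ → ℂᵈ` of an operator `A`; `‖ker A x y‖` is the norm `|A(x,y)|`. -/
def ker {d : ℕ} (A : Op d) (x y : Site) : Fib d →L[ℂ] Fib d :=
  LinearMap.toContinuousLinearMap
    { toFun := fun v => A (lp.single 2 y v) x
      map_add' := fun v w => by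
        have h : lp.single (E := fun _ : Site => Fib d) 2 y (v + w)
            = lp.single 2 y v + lp.single 2 y w := by
          apply lp.ext
          funext j
          by_cases hj : j = y
          · subst hj
            simp [lp.single_apply_self, lp.coeFn_add]
          · simp [lp.single_apply_ne _ _ _ hj, lp.coeFn_add]
        show (A (lp.single 2 y (v + w))) x = _
        rw [h, map_add, lp.coeFn_add]
        rfl
      map_smul' := fun c v => by
        show (A (lp.single 2 y (c • v))) x = _
        rw [lp.single_smul, map_smul, lp.coeFn_smul]
        rfl }

/-- `ν`-short-range operators: the kernel satisfies `|A(x,y)| ≤ ν⁻¹ e^{-2ν|x-y|}`. -/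
def ShortRange {d : ℕ} (ν : ℝ) (A : Op d) : Prop :=
  ∀ x y : Site, ‖ker A x y‖ ≤ ν⁻¹ * Real.exp (-2 * ν * dist1 x y)

private lemma indicator_memℓp {d : ℕ} (S : Set Site) (f : L2 d) :
    Memℓp (S.indicator (fun y => (f : ∀ _ : Site, Fib d) y)) 2 := by
  apply memℓp_gen
  have hs : Summable fun i : Site => ‖(f : ∀ _ : Site, Fib d) i‖ ^ (2 : ℝ≥0∞).toReal :=
    (lp.memℓp f).summable (by norm_num)
  refine hs.of_nonneg_of_le (fun i => ?_) (fun i => ?_)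
  · positivity
  · exact Real.rpow_le_rpow (norm_nonneg _) (norm_indicator_le_norm_self _ _) (by norm_num)

/-- Multiplication by the indicator function of a set `S ⊆ ℤ²`. -/
def indOp {d : ℕ} (S : Set Site) : Op d :=
  LinearMap.mkContinuous
    { toFun := fun f => ⟨S.indicator (fun y => (f : ∀ _ : Site, Fib d) y),
        indicator_memℓp S f⟩
      map_add' := fun f g => by
        apply lp.ext
        funext j
        by_cases hj : j ∈ S <;>
          simp [lp.coeFn_add, Set.indicator_apply, hj] <;> erw [Pi.add_apply] <;> simp [hj]
      map_smul' := fun c f => by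
        apply lp.ext
        funext j
        by_cases hj : j ∈ S <;>
          simp [lp.coeFn_smul, Set.indicator_apply, hj] }
    1 (fun f => by
      rw [one_mul]
      apply lp.norm_le_of_tsum_le (by norm_num) (norm_nonneg f)
      show (∑' i : Site, ‖S.indicator (fun y => (f : ∀ _ : Site, Fib d) y) i‖ ^ (2 : ℝ≥0∞).toReal) ≤ _
      rw [lp.norm_rpow_eq_tsum (by norm_num) f]
      have hs : Summable fun i : Site => ‖(f : ∀ _ : Site, Fib d) i‖ ^ (2 : ℝ≥0∞).toReal :=
        (lp.memℓp f).summable (by norm_num)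
      refine Summable.tsum_le_tsum (fun i => ?_) ((indicator_memℓp S f).summable (by norm_num)) hs
      exact Real.rpow_le_rpow (norm_nonneg _) (norm_indicator_le_norm_self _ _) (by norm_num))

/-- Multiplication by the indicator function of `ℕ × ℤ`. -/
def Lam1 (d : ℕ) : Op d := indOp {x : Site | 0 ≤ x.1}

/-- Multiplication by the indicator function of `ℤ × ℕ`. -/
def Lam2 (d : ℕ) : Op d := indOp {x : Site | 0 ≤ x.2}

/-- The spectral projection `P_λ(H) = 𝟙_{(-∞,λ)}(H)`, via the continuous functional
calculus (for `H` selfadjoint with a spectral gap around `λ`, the indicator function of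
`(-∞,λ)` is continuous on the spectrum of `H`). -/
def specProj {d : ℕ} (lam : ℝ) (H : Op d) : Op d :=
  cfc (instCFC := IsSelfAdjoint.instContinuousFunctionalCalculus) (fun t : ℝ => if t < lam then (1 : ℝ) else 0) H

/-- Commutator of operators. -/
def commOp {d : ℕ} (A B : Op d) : Op d := A * B - B * A

/-- Trace of a `d × d` block. -/
def blockTr {d : ℕ} (T : Fib d →L[ℂ] Fib d) : ℂ :=
  LinearMap.trace ℂ (Fib d) (T : Fib d →ₗ[ℂ] Fib d)

/-- The operator `B = P_λ(H) [[P_λ(H),Λ₁],[P_λ(H),Λ₂]]`. -/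
def hallOp {d : ℕ} (lam : ℝ) (H : Op d) : Op d :=
  specProj lam H *
    commOp (commOp (specProj lam H) (Lam1 d)) (commOp (specProj lam H) (Lam2 d))

/-- The bulk conductance `σ(H,λ) = -2πi ∑_{x ∈ ℤ²} tr(B(x,x))`. -/
def conduct {d : ℕ} (lam : ℝ) (H : Op d) : ℂ :=
  (-2 * (Real.pi : ℂ) * Complex.I) * ∑' x : Site, blockTr (ker (hallOp lam H) x x)

/-- The boundary `∂Ω` of `Ω ⊆ ℤ²`. -/
def bdry (Ω : Set Site) : Set Site :=
  {x ∈ Ω | ¬ ball1 x 1 ⊆ Ω} ∪ {x ∈ Ωᶜ | ¬ ball1 x 1 ⊆ Ωᶜ}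

/-- `H_e` is an edge operator for the pair `(H₊, H₋)` on `Ω`: it is selfadjoint,
`ν`-short-range, and `E = H_e - 𝟙_Ω H₊ 𝟙_Ω - 𝟙_{Ωᶜ} H₋ 𝟙_{Ωᶜ}` satisfies
`|E(x,y)| ≤ ν⁻¹ e^{-2ν d(x,∂Ω)}`.  (The distance `d(x,∂Ω)` is expressed through all its
real lower bounds `r`; if `∂Ω = ∅` this forces `E(x,y) = 0`, consistent with
`d(x,∅) = +∞`.) -/
def IsEdgeOp {d : ℕ} (ν : ℝ) (Hp Hm : Op d) (Ω : Set Site) (He : Op d) : Prop :=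
  IsSelfAdjoint He ∧ ShortRange ν He ∧
    ∀ x y : Site, ∀ r : ℝ, (∀ z ∈ bdry Ω, r ≤ dist1 x z) →
      ‖ker (He - indOp Ω * Hp * indOp Ω - indOp Ωᶜ * Hm * indOp Ωᶜ) x y‖ ≤
        ν⁻¹ * Real.exp (-2 * ν * r)

private lemma indOp_single_mem {d : ℕ} (S : Set Site) (y : Site) (v : Fib d) (hy : y ∈ S) :
    (indOp S : Op d) (lp.single 2 y v) = lp.single 2 y v := by
  apply lp.ext
  funext j
  show S.indicator (fun j => (lp.single 2 y v : ∀ _ : Site, Fib d) j) j = _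
  by_cases hj : j ∈ S
  · rw [Set.indicator_of_mem hj]
  · rw [Set.indicator_of_notMem hj]
    have hne : j ≠ y := fun h => hj (h ▸ hy)
    rw [lp.single_apply_ne _ _ _ hne]

private lemma indOp_single_not_mem {d : ℕ} (S : Set Site) (y : Site) (v : Fib d) (hy : y ∉ S) :
    (indOp S : Op d) (lp.single 2 y v) = 0 := by
  apply lp.ext
  funext j
  show S.indicator (fun j => (lp.single 2 y v : ∀ _ : Site, Fib d) j) j = _
  by_cases hj : j ∈ S
  · rw [Set.indicator_of_mem hj]
    have hne : j ≠ y := fun h => hy (h ▸ hj)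
    rw [lp.single_apply_ne _ _ _ hne]
    rfl
  · rw [Set.indicator_of_notMem hj]
    rfl

private lemma ker_comm_indOp {d : ℕ} (A : Op d) (S : Set Site) (x y : Site) (v : Fib d) :
    ker (commOp A (indOp S)) x y v =
      A ((indOp S : Op d) (lp.single 2 y v)) x
        - S.indicator (fun j => (A (lp.single 2 y v) : ∀ _ : Site, Fib d) j) x := by
  show ((A * (indOp S : Op d) - (indOp S : Op d) * A) (lp.single 2 y v) : ∀ _ : Site, Fib d) x = _
  rw [ContinuousLinearMap.sub_apply, lp.coeFn_sub]
  rfl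

private lemma ker_comm_eq_zero_mem {d : ℕ} (A : Op d) (S : Set Site) (x y : Site)
    (hx : x ∈ S) (hy : y ∈ S) : ker (commOp A (indOp S)) x y = 0 := by
  ext v
  rw [ker_comm_indOp, indOp_single_mem _ _ _ hy, Set.indicator_of_mem hx]
  simp

private lemma ker_comm_eq_zero_not_mem {d : ℕ} (A : Op d) (S : Set Site) (x y : Site)
    (hx : x ∉ S) (hy : y ∉ S) : ker (commOp A (indOp S)) x y = 0 := by
  ext v
  rw [ker_comm_indOp, indOp_single_not_mem _ _ _ hy, Set.indicator_of_notMem hx]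
  simp

private lemma ker_comm_norm_cross {d : ℕ} (A : Op d) (S : Set Site) (x y : Site)
    (h : (x ∈ S ∧ y ∉ S) ∨ (x ∉ S ∧ y ∈ S)) :
    ‖ker (commOp A (indOp S)) x y‖ = ‖ker A x y‖ := by
  rcases h with ⟨hx, hy⟩ | ⟨hx, hy⟩
  · have : ker (commOp A (indOp S)) x y = -(ker A x y) := by
      apply ContinuousLinearMap.ext; intro v
      rw [ker_comm_indOp, indOp_single_not_mem _ _ _ hy, Set.indicator_of_mem hx, map_zero]
      show (0 : ∀ _ : Site, Fib d) x - _ = _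
      rw [Pi.zero_apply, zero_sub, ContinuousLinearMap.neg_apply]
      rfl
    rw [this, norm_neg]
  · have : ker (commOp A (indOp S)) x y = ker A x y := by
      apply ContinuousLinearMap.ext; intro v
      rw [ker_comm_indOp, indOp_single_mem _ _ _ hy, Set.indicator_of_notMem hx, sub_zero]
      rfl
    rw [this]

/-- Interpolated kernel bound for `[A,Λ₁]` on the ball `B_{2r}(0)`. -/
theorem comm_kernel_bound_interpolated (β r ε : ℝ) (hβ : 0 < β) (hr : 0 < r) (hε : 0 < ε)
    (d : ℕ) (hd : 1 ≤ d) (A : Op d)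
    (hA : ∀ x y : Site, ‖ker A x y‖ ≤ Real.exp (-2 * β * dist1 x y))
    (hAflat : ∀ x ∈ ball1 0 (2 * r), ∀ y ∈ ball1 0 (2 * r), ‖ker A x y‖ ≤ ε) :
    ∀ x ∈ ball1 0 (2 * r), ∀ y ∈ ball1 0 (2 * r),
      ‖ker (commOp A (Lam1 d)) x y‖ ≤
        Real.sqrt ε * Real.exp (-β * |(x.1 : ℝ)| - β * |(y.1 : ℝ)|
          - β * |(x.2 : ℝ) - (y.2 : ℝ)|) := by
  intro x hx y hy
  set S : Set Site := {x : Site | 0 ≤ x.1}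
  have hrhs : 0 ≤ Real.sqrt ε * Real.exp (-β * |(x.1 : ℝ)| - β * |(y.1 : ℝ)|
      - β * |(x.2 : ℝ) - (y.2 : ℝ)|) := by positivity
  by_cases hxS : x ∈ S <;> by_cases hyS : y ∈ S
  · rw [show Lam1 d = indOp S from rfl, ker_comm_eq_zero_mem A S x y hxS hyS, norm_zero]
    exact hrhs
  all_goals try { rw [show Lam1 d = indOp S from rfl,
      ker_comm_eq_zero_not_mem A S x y hxS hyS, norm_zero]; exact hrhs }
  all_goals {
    rw [show Lam1 d = indOp S from rfl, ker_comm_norm_cross A S x y (by tauto)]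
    -- cross case: |x₁ - y₁| = |x₁| + |y₁|
    have habs : |(x.1 : ℝ) - (y.1 : ℝ)| = |(x.1 : ℝ)| + |(y.1 : ℝ)| := by
      simp only [S, Set.mem_setOf_eq, not_le] at hxS hyS
      first
      | · have h1 : (0 : ℝ) ≤ (x.1 : ℝ) := by exact_mod_cast hxS
          have h2 : (y.1 : ℝ) < 0 := by exact_mod_cast hyS
          rw [abs_of_nonneg h1, abs_of_neg h2, abs_of_nonneg (by linarith)]; ring
      | · have h1 : (x.1 : ℝ) < 0 := by exact_mod_cast hxS
          have h2 : (0 : ℝ) ≤ (y.1 : ℝ) := by exact_mod_cast hyS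
          rw [abs_of_neg h1, abs_of_nonneg h2, abs_of_neg (by linarith)]; ring
    set D := dist1 x y with hD
    have hDval : D = |(x.1 : ℝ)| + |(y.1 : ℝ)| + |(x.2 : ℝ) - (y.2 : ℝ)| := by
      rw [hD, dist1, habs]
    have h1 : ‖ker A x y‖ ≤ ε := hAflat x hx y hy
    have h2 : ‖ker A x y‖ ≤ Real.exp (-2 * β * D) := hA x y
    have hK : (0 : ℝ) ≤ ‖ker A x y‖ := norm_nonneg _
    have hsq : ‖ker A x y‖ ≤ Real.sqrt (ε * Real.exp (-2 * β * D)) := by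
      have : ‖ker A x y‖ * ‖ker A x y‖ ≤ ε * Real.exp (-2 * β * D) :=
        mul_le_mul h1 h2 hK hε.le
      calc ‖ker A x y‖ = Real.sqrt (‖ker A x y‖ * ‖ker A x y‖) :=
            (Real.sqrt_mul_self hK).symm
        _ ≤ _ := Real.sqrt_le_sqrt this
    have hse : Real.sqrt (Real.exp (-2 * β * D)) = Real.exp (-β * D) := by
      rw [show (-2 * β * D) = (-β * D) + (-β * D) by ring, Real.exp_add,
        Real.sqrt_mul_self (Real.exp_nonneg _)]
    calc ‖ker A x y‖ ≤ Real.sqrt (ε * Real.exp (-2 * β * D)) := hsq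
      _ = Real.sqrt ε * Real.exp (-β * D) := by
          rw [Real.sqrt_mul hε.le, hse]
      _ ≤ _ := by
          apply mul_le_mul_of_nonneg_left _ (Real.sqrt_nonneg _)
          apply Real.exp_le_exp.mpr
          rw [hDval]; ring_nf; rfl }

end
end

section
/- There exists λ₀ > 0 such that for all ξ ∈ [−π,π]² and all s ∈ (0,1]: √((2s·η(ξ))² + |ω(ξ)|²) ≥ λ₀ · s, where ω(ξ) = 1 + e^{iξ₁} + e^{iξ₂} and η(ξ) = sin(ξ₁) − sin(ξ₂) + sin(ξ₂ − ξ₁). -/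
lemma bloch_key (c1 s1 c2 s2 : ℝ) (h1 : c1^2+s1^2=1) (h2 : c2^2+s2^2=1) :
    1 ≤ 4*(s1 - s2 + (s2*c1 - c2*s1))^2 + ((1+c1+c2)^2 + (s1+s2)^2) := by
  nlinarith [sq_nonneg (s1-s2), sq_nonneg (s1+s2), sq_nonneg (c1-c2), sq_nonneg (c1+c2),
    sq_nonneg (1+c1+c2), sq_nonneg (s2*c1-c2*s1), sq_nonneg (s1 - s2 + (s2*c1 - c2*s1)),
    sq_nonneg (c1*c2 - s1*s2), sq_nonneg (c1*c2 + s1*s2)]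

/-- Uniform lower bound `λ(ξ) ≥ λ₀ s` for the positive Bloch
eigenvalue of the Haldane-type Hamiltonian. -/
theorem bloch_eigenvalue_lower_bound :
    ∃ lam0 : ℝ, 0 < lam0 ∧
      ∀ ξ1 ξ2 : ℝ, ξ1 ∈ Set.Icc (-Real.pi) Real.pi → ξ2 ∈ Set.Icc (-Real.pi) Real.pi →
      ∀ s : ℝ, 0 < s → s ≤ 1 →
        lam0 * s ≤ Real.sqrt
          ((2 * s * (Real.sin ξ1 - Real.sin ξ2 + Real.sin (ξ2 - ξ1))) ^ 2 +
            ‖1 + Complex.exp (Complex.I * ξ1) + Complex.exp (Complex.I * ξ2)‖ ^ 2) := by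
  refine ⟨1, one_pos, fun ξ1 ξ2 _ _ s hs hs1 => ?_⟩
  have hz : (1 + Complex.exp (Complex.I * ξ1) + Complex.exp (Complex.I * ξ2)) =
      Complex.ofReal (1 + Real.cos ξ1 + Real.cos ξ2) +
      Complex.ofReal (Real.sin ξ1 + Real.sin ξ2) * Complex.I := by
    rw [mul_comm Complex.I, mul_comm Complex.I, Complex.exp_mul_I, Complex.exp_mul_I,
      ← Complex.ofReal_cos, ← Complex.ofReal_cos, ← Complex.ofReal_sin, ← Complex.ofReal_sin]
    push_cast; ring
  have habs : ‖1 + Complex.exp (Complex.I * ξ1) + Complex.exp (Complex.I * ξ2)‖ ^ 2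
      = (1 + Real.cos ξ1 + Real.cos ξ2) ^ 2 + (Real.sin ξ1 + Real.sin ξ2) ^ 2 := by
    rw [hz, Complex.sq_norm, Complex.normSq_add_mul_I]
  rw [habs, Real.sin_sub]
  rw [show Real.sin ξ2 * Real.cos ξ1 - Real.cos ξ2 * Real.sin ξ1
      = Real.sin ξ2 * Real.cos ξ1 - Real.cos ξ2 * Real.sin ξ1 from rfl]
  have key := bloch_key (Real.cos ξ1) (Real.sin ξ1) (Real.cos ξ2) (Real.sin ξ2)
    (by rw [add_comm]; exact Real.sin_sq_add_cos_sq ξ1)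
    (by rw [add_comm]; exact Real.sin_sq_add_cos_sq ξ2)
  rw [show (1:ℝ)*s = s from one_mul s, Real.le_sqrt hs.le]
  have hB : 0 ≤ (1 + Real.cos ξ1 + Real.cos ξ2) ^ 2 + (Real.sin ξ1 + Real.sin ξ2) ^ 2 := by
    positivity
  nlinarith [mul_le_mul_of_nonneg_left key (sq_nonneg s),
    mul_nonneg (by nlinarith : (0:ℝ) ≤ 1 - s^2) hB]
  positivity
end

section
/- There exists μ₀ > 0 such that for all ξ ∈ [−π,π]²: |ω(ξ)| ≥ μ₀ · min(‖ξ − ξ₊*‖, ‖ξ − ξ₋*‖), where ω(ξ) = 1 + e^{iξ₁} + e^{iξ₂}, ξ₊* = (2π/3, −2π/3), ξ₋* = (−2π/3, 2π/3), and ‖·‖ is the Euclidean norm on ℝ². -/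
open Real

private lemma omega_sin_lb {s : ℝ} (h0 : 0 ≤ s) (h1 : s ≤ 5 * π / 6) :
    3 / (5 * π) * s ≤ Real.sin s := by
  have hpi := Real.pi_pos
  rcases le_total s (π / 2) with hs | hs
  · have hj := Real.mul_le_sin h0 hs
    have h2 : 3 / (5 * π) * s ≤ 2 / π * s := by
      apply mul_le_mul_of_nonneg_right _ h0
      rw [div_le_div_iff₀ (by positivity) (by positivity)]
      nlinarith
    linarith
  · have hmem1 : π / 6 ∈ Set.Icc (-(π/2)) (π/2) := by constructor <;> nlinarith
    have hmem2 : π - s ∈ Set.Icc (-(π/2)) (π/2) := by constructor <;> nlinarith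
    have hmono := Real.strictMonoOn_sin.monotoneOn hmem1 hmem2 (by nlinarith)
    rw [Real.sin_pi_div_six, Real.sin_pi_sub] at hmono
    have : 3 / (5 * π) * s ≤ 1 / 2 := by
      rw [div_mul_eq_mul_div, div_le_div_iff₀ (by positivity) (by norm_num)]
      nlinarith
    linarith

private lemma omega_chord_lb {t : ℝ} (ht : |t| ≤ 5 * π / 3) :
    (3 / (5 * π))^2 * t^2 ≤ 2 - 2 * Real.cos t := by
  have hpi := Real.pi_pos
  have key : ∀ u : ℝ, 0 ≤ u → u ≤ 5 * π / 3 → (3 / (5 * π))^2 * u^2 ≤ 2 - 2 * Real.cos u := by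
    intro u hu0 hu1
    have hhalf0 : (0:ℝ) ≤ u / 2 := by linarith
    have hhalf1 : u / 2 ≤ 5 * π / 6 := by linarith
    have hsin := omega_sin_lb hhalf0 hhalf1
    have hsinnn : 0 ≤ 3 / (5 * π) * (u / 2) := by positivity
    have hsq : (3 / (5 * π) * (u / 2))^2 ≤ Real.sin (u / 2) ^ 2 := by
      have := mul_self_le_mul_self hsinnn hsin
      simpa [pow_two] using this
    have hcos : Real.cos u = 1 - 2 * Real.sin (u / 2) ^ 2 := by
      have h2 := Real.cos_two_mul (u / 2)
      have h3 := Real.sin_sq_add_cos_sq (u / 2)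
      have h4 : (2:ℝ) * (u / 2) = u := by ring
      rw [h4] at h2
      nlinarith
    rw [hcos]
    nlinarith [hsq]
  rcases le_total 0 t with h | h
  · exact key t h (by rwa [abs_of_nonneg h] at ht)
  · have := key (-t) (by linarith) (by rwa [abs_of_nonpos h] at ht)
    simpa [Real.cos_neg] using this

set_option maxHeartbeats 1000000 in
private lemma omega_F (u p : ℝ) (hL : 8*u^2+15*u+4+8*p^2 ≤ 0) :
    (8*u^2+15*u+4+8*p^2)^2*(u^2+p^2) ≤ 3*u^2*(4-u^2-p^2) := by
  nlinarith [sq_nonneg (u+1), sq_nonneg p, sq_nonneg (u*(u+1)), sq_nonneg (p*(u+1)),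
    sq_nonneg (u+2), sq_nonneg u, mul_nonneg (neg_nonneg.2 hL) (sq_nonneg p),
    mul_nonneg (neg_nonneg.2 hL) (sq_nonneg (u+1))]

set_option maxHeartbeats 1000000 in
/-- Core algebraic inequality: `8 |ω|² ≥ P` on the branch `s2 ≤ s1`. -/
private lemma omega_core (c1 s1 c2 s2 r : ℝ) (h1 : c1^2 + s1^2 = 1) (h2 : c2^2 + s2^2 = 1)
    (hq : s2 ≤ s1) (hr : r^2 = 3) (hr0 : 0 ≤ r) :
    0 ≤ 20 + 15*c1 + 15*c2 + 16*c1*c2 + 16*s1*s2 + r*(s1 - s2) := by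
  set u := c1 + c2 with hu
  set p := s1 + s2 with hp
  set q := s1 - s2 with hqq
  have hq0 : 0 ≤ q := by rw [hqq]; linarith
  have hE : 20 + 15*c1 + 15*c2 + 16*c1*c2 + 16*s1*s2 + r*(s1 - s2)
      = (8*u^2 + 15*u + 4 + 8*p^2) + r*q := by
    rw [hu, hp, hqq]; linear_combination (-8)*h1 + (-8)*h2
  rw [hE]
  by_cases hL : 0 ≤ 8*u^2 + 15*u + 4 + 8*p^2
  · have := mul_nonneg hr0 hq0; linarith
  · push_neg at hL
    have key : q^2*(u^2+p^2) = u^2*(4 - u^2 - p^2) := by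
      rw [hu, hp, hqq]
      linear_combination (2*(c1+c2)^2 - ((c1+c2)*(c1-c2) - (s1+s2)*(s1-s2)))*h1
        + (2*(c1+c2)^2 + ((c1+c2)*(c1-c2) - (s1+s2)*(s1-s2)))*h2
    have hF := omega_F u p (le_of_lt hL)
    have h3 : (8*u^2+15*u+4+8*p^2)^2*(u^2+p^2) ≤ (3*q^2)*(u^2+p^2) := by
      rw [show (3*q^2)*(u^2+p^2) = 3*(q^2*(u^2+p^2)) by ring, key]; linarith
    have hup : 0 < u^2 + p^2 := by
      rcases lt_or_eq_of_le (by positivity : (0:ℝ) ≤ u^2 + p^2) with h | h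
      · exact h
      · exfalso
        have hu0 : u = 0 := by nlinarith [sq_nonneg u, sq_nonneg p]
        have hp0 : p = 0 := by nlinarith [sq_nonneg u, sq_nonneg p]
        rw [hu0, hp0] at hL; norm_num at hL
    have h4 : (8*u^2+15*u+4+8*p^2)^2 ≤ 3*q^2 := le_of_mul_le_mul_right h3 hup
    have hrq2 : (r*q)^2 = 3*q^2 := by rw [mul_pow, hr]
    have h5 : -(8*u^2+15*u+4+8*p^2) ≤ r*q := by
      nlinarith [mul_nonneg hr0 hq0, h4, hrq2]
    linarith

set_option maxHeartbeats 1000000 in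
/-- Dirac-cone lower bound: `|ω(ξ)| ≥ μ₀ · dist(ξ, {ξ₊*, ξ₋*})`
(Euclidean distance), where `ξ±* = ±(2π/3, -2π/3)` are the zeros of `ω`. -/
theorem omega_lower_bound :
    ∃ mu0 : ℝ, 0 < mu0 ∧
      ∀ ξ1 ξ2 : ℝ, ξ1 ∈ Set.Icc (-Real.pi) Real.pi → ξ2 ∈ Set.Icc (-Real.pi) Real.pi →
        mu0 * min (Real.sqrt ((ξ1 - 2 * Real.pi / 3) ^ 2 + (ξ2 + 2 * Real.pi / 3) ^ 2))
            (Real.sqrt ((ξ1 + 2 * Real.pi / 3) ^ 2 + (ξ2 - 2 * Real.pi / 3) ^ 2)) ≤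
          ‖1 + Complex.exp (Complex.I * ξ1) + Complex.exp (Complex.I * ξ2)‖ := by
  have hpi := Real.pi_pos
  have hpi315 : π < 3.15 := Real.pi_lt_d2
  have hpi3 : 3 < π := Real.pi_gt_three
  refine ⟨1/16, by norm_num, fun ξ1 ξ2 hx hy => ?_⟩
  obtain ⟨hx1, hx2⟩ := hx
  obtain ⟨hy1, hy2⟩ := hy
  -- squared modulus
  have habs2 : (‖1 + Complex.exp (Complex.I * ξ1) + Complex.exp (Complex.I * ξ2)‖)^2
      = 3 + 2*Real.cos ξ1 + 2*Real.cos ξ2 + 2*(Real.cos ξ1)*(Real.cos ξ2)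
        + 2*(Real.sin ξ1)*(Real.sin ξ2) := by
    have hre : (1 + Complex.exp (Complex.I * ξ1) + Complex.exp (Complex.I * ξ2)).re
        = 1 + Real.cos ξ1 + Real.cos ξ2 := by
      rw [mul_comm Complex.I (ξ1:ℂ), mul_comm Complex.I (ξ2:ℂ)]
      simp [Complex.exp_ofReal_mul_I_re]
    have him : (1 + Complex.exp (Complex.I * ξ1) + Complex.exp (Complex.I * ξ2)).im
        = Real.sin ξ1 + Real.sin ξ2 := by
      rw [mul_comm Complex.I (ξ1:ℂ), mul_comm Complex.I (ξ2:ℂ)]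
      simp [Complex.exp_ofReal_mul_I_im]
    rw [Complex.sq_norm, Complex.normSq_apply, hre, him]
    linear_combination (Real.sin_sq_add_cos_sq ξ1) + (Real.sin_sq_add_cos_sq ξ2)
  set c1 := Real.cos ξ1 with hc1
  set s1 := Real.sin ξ1 with hs1
  set c2 := Real.cos ξ2 with hc2
  set s2 := Real.sin ξ2 with hs2
  have h1 : c1^2 + s1^2 = 1 := by rw [hc1, hs1, add_comm]; exact Real.sin_sq_add_cos_sq ξ1
  have h2 : c2^2 + s2^2 = 1 := by rw [hc2, hs2, add_comm]; exact Real.sin_sq_add_cos_sq ξ2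
  set r := Real.sqrt 3 with hrdef
  have hr : r^2 = 3 := Real.sq_sqrt (by norm_num)
  have hr0 : 0 ≤ r := Real.sqrt_nonneg 3
  set A := (ξ1 - 2 * π / 3) ^ 2 + (ξ2 + 2 * π / 3) ^ 2 with hA
  set B := (ξ1 + 2 * π / 3) ^ 2 + (ξ2 - 2 * π / 3) ^ 2 with hB
  set Z := ‖1 + Complex.exp (Complex.I * ξ1) + Complex.exp (Complex.I * ξ2)‖ with hZ
  -- trig values at 2π/3
  have hcval : Real.cos (2 * π / 3) = -(1/2) := by
    rw [show 2 * π / 3 = π - π / 3 by ring, Real.cos_pi_sub, Real.cos_pi_div_three]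
  have hsval : Real.sin (2 * π / 3) = r / 2 := by
    rw [show 2 * π / 3 = π - π / 3 by ring, Real.sin_pi_sub, Real.sin_pi_div_three, hrdef]
  -- chord bounds
  have hchord1 : (3/(5*π))^2 * (ξ1 - 2*π/3)^2 ≤ 2 + c1 - r*s1 := by
    have hb : |ξ1 - 2*π/3| ≤ 5*π/3 := by rw [abs_le]; constructor <;> linarith
    have hcb := omega_chord_lb hb
    have hc : Real.cos (ξ1 - 2*π/3) = -(1/2)*c1 + r/2*s1 := by
      rw [Real.cos_sub, hcval, hsval, hc1, hs1]; ring
    rw [hc] at hcb; linarith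
  have hchord2 : (3/(5*π))^2 * (ξ2 + 2*π/3)^2 ≤ 2 + c2 + r*s2 := by
    have hb : |ξ2 + 2*π/3| ≤ 5*π/3 := by rw [abs_le]; constructor <;> linarith
    have hcb := omega_chord_lb hb
    have hc : Real.cos (ξ2 + 2*π/3) = -(1/2)*c2 - r/2*s2 := by
      rw [Real.cos_add, hcval, hsval, hc2, hs2]; ring
    rw [hc] at hcb; linarith
  have hchord3 : (3/(5*π))^2 * (ξ1 + 2*π/3)^2 ≤ 2 + c1 + r*s1 := by
    have hb : |ξ1 + 2*π/3| ≤ 5*π/3 := by rw [abs_le]; constructor <;> linarith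
    have hcb := omega_chord_lb hb
    have hc : Real.cos (ξ1 + 2*π/3) = -(1/2)*c1 - r/2*s1 := by
      rw [Real.cos_add, hcval, hsval, hc1, hs1]; ring
    rw [hc] at hcb; linarith
  have hchord4 : (3/(5*π))^2 * (ξ2 - 2*π/3)^2 ≤ 2 + c2 - r*s2 := by
    have hb : |ξ2 - 2*π/3| ≤ 5*π/3 := by rw [abs_le]; constructor <;> linarith
    have hcb := omega_chord_lb hb
    have hc : Real.cos (ξ2 - 2*π/3) = -(1/2)*c2 + r/2*s2 := by
      rw [Real.cos_sub, hcval, hsval, hc2, hs2]; ring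
    rw [hc] at hcb; linarith
  -- constant comparison : 1/256 ≤ (1/8) * (3/(5π))^2
  have hconst : (1:ℝ)/256 ≤ (1/8) * (3/(5*π))^2 := by
    rw [div_pow, show (1:ℝ)/8 * (3^2/(5*π)^2) = 9/(8*(5*π)^2) by ring,
      le_div_iff₀ (by positivity)]
    nlinarith
  have hAnn : (0:ℝ) ≤ A := by rw [hA]; positivity
  have hBnn : (0:ℝ) ≤ B := by rw [hB]; positivity
  set m := min (Real.sqrt A) (Real.sqrt B) with hm
  have hmnn : 0 ≤ m := le_min (Real.sqrt_nonneg _) (Real.sqrt_nonneg _)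
  have hkey : (1/16 * m)^2 ≤ Z^2 := by
    rcases le_total s2 s1 with hcase | hcase
    · have hcore := omega_core c1 s1 c2 s2 r h1 h2 hcase hr hr0
      have hP : (3/(5*π))^2 * A ≤ 4 + c1 + c2 - r*s1 + r*s2 := by
        rw [hA]; linarith [hchord1, hchord2]
      have hmA : m^2 ≤ A := by
        have hle : m ≤ Real.sqrt A := min_le_left _ _
        calc m^2 ≤ (Real.sqrt A)^2 := pow_le_pow_left₀ hmnn hle 2
          _ = A := Real.sq_sqrt hAnn
      have hmul := mul_le_mul_of_nonneg_right hconst hAnn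
      have hZA : (1/256) * A ≤ Z^2 := by
        rw [habs2]; linarith [hP, hcore, hmul]
      calc (1/16 * m)^2 = (1/256) * m^2 := by ring
        _ ≤ (1/256) * A := mul_le_mul_of_nonneg_left hmA (by norm_num)
        _ ≤ Z^2 := hZA
    · have hcore := omega_core c2 s2 c1 s1 r h2 h1 hcase hr hr0
      have hQ : (3/(5*π))^2 * B ≤ 4 + c1 + c2 + r*s1 - r*s2 := by
        rw [hB]; linarith [hchord3, hchord4]
      have hmB : m^2 ≤ B := by
        have hle : m ≤ Real.sqrt B := min_le_right _ _
        calc m^2 ≤ (Real.sqrt B)^2 := pow_le_pow_left₀ hmnn hle 2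
          _ = B := Real.sq_sqrt hBnn
      have hmul := mul_le_mul_of_nonneg_right hconst hBnn
      have hZB : (1/256) * B ≤ Z^2 := by
        rw [habs2]; linarith [hQ, hcore, hmul]
      calc (1/16 * m)^2 = (1/256) * m^2 := by ring
        _ ≤ (1/256) * B := mul_le_mul_of_nonneg_left hmB (by norm_num)
        _ ≤ Z^2 := hZB
  have hZnn : 0 ≤ Z := norm_nonneg _
  have hlhsnn : 0 ≤ 1/16 * m := by positivity
  calc (1:ℝ)/16 * m = Real.sqrt ((1/16 * m)^2) := (Real.sqrt_sq hlhsnn).symm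
    _ ≤ Real.sqrt (Z^2) := Real.sqrt_le_sqrt hkey
    _ = Z := Real.sqrt_sq hZnn
end

section
/- For ξ = (ξ₁,ξ₂) ∈ [−π,π]², one has 1 + e^{iξ₁} + e^{iξ₂} = 0 if and only if ξ = (2π/3, −2π/3) or ξ = (−2π/3, 2π/3). Moreover, at these two points, η(ξ) := sin(ξ₁) − sin(ξ₂) + sin(ξ₂ − ξ₁) takes the values ±3√3/2 respectively; in particular ω(ξ) := 1 + e^{iξ₁} + e^{iξ₂} and η(ξ) never vanish simultaneously on [−π,π]². -/
lemma cos_two_pi_div_three' : Real.cos (2 * Real.pi / 3) = -(1/2) := by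
  have h : 2 * Real.pi / 3 = Real.pi - Real.pi / 3 := by ring
  rw [h, Real.cos_pi_sub, Real.cos_pi_div_three]

lemma sin_two_pi_div_three' : Real.sin (2 * Real.pi / 3) = Real.sqrt 3 / 2 := by
  have h : 2 * Real.pi / 3 = Real.pi - Real.pi / 3 := by ring
  rw [h, Real.sin_pi_sub, Real.sin_pi_div_three]

lemma cos_eq_neg_half' {x : ℝ} (hx : x ∈ Set.Icc (-Real.pi) Real.pi)
    (h : Real.cos x = -(1/2)) : x = 2 * Real.pi / 3 ∨ x = -(2 * Real.pi / 3) := by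
  have hmem : 2 * Real.pi / 3 ∈ Set.Icc 0 Real.pi := by
    constructor <;> nlinarith [Real.pi_pos]
  rcases le_or_gt 0 x with h0 | h0
  · left
    exact Real.injOn_cos ⟨h0, hx.2⟩ hmem (by rw [h, cos_two_pi_div_three'])
  · right
    have : -x = 2 * Real.pi / 3 := by
      apply Real.injOn_cos ⟨by linarith, by linarith [hx.1]⟩ hmem
      rw [Real.cos_neg, h, cos_two_pi_div_three']
    linarith

lemma omega_key (x1 x2 : ℝ) :
    (1 + Complex.exp (Complex.I * x1) + Complex.exp (Complex.I * x2) = 0) ↔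
    (1 + Real.cos x1 + Real.cos x2 = 0 ∧ Real.sin x1 + Real.sin x2 = 0) := by
  rw [mul_comm Complex.I (x1:ℂ), mul_comm Complex.I (x2:ℂ),
    Complex.exp_mul_I, Complex.exp_mul_I, Complex.ext_iff]
  simp [Complex.cos_ofReal_re, Complex.sin_ofReal_re]

lemma eta_pos : Real.sin (2 * Real.pi / 3) - Real.sin (-(2 * Real.pi / 3)) +
    Real.sin (-(2 * Real.pi / 3) - 2 * Real.pi / 3) = 3 * Real.sqrt 3 / 2 := by
  have h : -(2 * Real.pi / 3) - 2 * Real.pi / 3 = -(Real.pi + Real.pi / 3) := by ring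
  rw [Real.sin_neg, h, Real.sin_neg, Real.sin_add, Real.sin_pi, Real.cos_pi,
    sin_two_pi_div_three', Real.sin_pi_div_three]
  ring

lemma eta_neg : Real.sin (-(2 * Real.pi / 3)) - Real.sin (2 * Real.pi / 3) +
    Real.sin (2 * Real.pi / 3 - -(2 * Real.pi / 3)) = -(3 * Real.sqrt 3 / 2) := by
  have h : 2 * Real.pi / 3 - -(2 * Real.pi / 3) = Real.pi + Real.pi / 3 := by ring
  rw [Real.sin_neg, h, Real.sin_add, Real.sin_pi, Real.cos_pi,
    sin_two_pi_div_three', Real.sin_pi_div_three]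
  ring

/-- **Statement 13.** The zeros of `ω(ξ) = 1 + e^{iξ₁} + e^{iξ₂}` in `[-π,π]²` are
exactly `±(2π/3, -2π/3)`; at these points `η = ±3√3/2`, so `ω` and `η` never vanish
simultaneously. -/
theorem omega_zeros_and_eta :
    (∀ ξ1 ξ2 : ℝ, ξ1 ∈ Set.Icc (-Real.pi) Real.pi → ξ2 ∈ Set.Icc (-Real.pi) Real.pi →
      ((1 + Complex.exp (Complex.I * ξ1) + Complex.exp (Complex.I * ξ2) = 0) ↔
        ((ξ1 = 2 * Real.pi / 3 ∧ ξ2 = -(2 * Real.pi / 3)) ∨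
         (ξ1 = -(2 * Real.pi / 3) ∧ ξ2 = 2 * Real.pi / 3)))) ∧
    (Real.sin (2 * Real.pi / 3) - Real.sin (-(2 * Real.pi / 3)) +
        Real.sin (-(2 * Real.pi / 3) - 2 * Real.pi / 3) = 3 * Real.sqrt 3 / 2) ∧
    (Real.sin (-(2 * Real.pi / 3)) - Real.sin (2 * Real.pi / 3) +
        Real.sin (2 * Real.pi / 3 - -(2 * Real.pi / 3)) = -(3 * Real.sqrt 3 / 2)) ∧
    (∀ ξ1 ξ2 : ℝ, ξ1 ∈ Set.Icc (-Real.pi) Real.pi → ξ2 ∈ Set.Icc (-Real.pi) Real.pi →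
      ¬(1 + Complex.exp (Complex.I * ξ1) + Complex.exp (Complex.I * ξ2) = 0 ∧
        Real.sin ξ1 - Real.sin ξ2 + Real.sin (ξ2 - ξ1) = 0)) := by
  have sqrt3_pos : (0:ℝ) < Real.sqrt 3 := Real.sqrt_pos.mpr (by norm_num)
  have hmain : ∀ ξ1 ξ2 : ℝ, ξ1 ∈ Set.Icc (-Real.pi) Real.pi →
      ξ2 ∈ Set.Icc (-Real.pi) Real.pi →
      ((1 + Complex.exp (Complex.I * ξ1) + Complex.exp (Complex.I * ξ2) = 0) ↔
        ((ξ1 = 2 * Real.pi / 3 ∧ ξ2 = -(2 * Real.pi / 3)) ∨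
         (ξ1 = -(2 * Real.pi / 3) ∧ ξ2 = 2 * Real.pi / 3))) := by
    intro ξ1 ξ2 h1 h2
    rw [omega_key]
    constructor
    · rintro ⟨hc, hs⟩
      have p1 : Real.sin ξ1 ^ 2 + Real.cos ξ1 ^ 2 = 1 := Real.sin_sq_add_cos_sq ξ1
      have p2 : Real.sin ξ2 ^ 2 + Real.cos ξ2 ^ 2 = 1 := Real.sin_sq_add_cos_sq ξ2
      have hsq : Real.sin ξ2 ^ 2 = Real.sin ξ1 ^ 2 := by
        rw [show Real.sin ξ2 = -Real.sin ξ1 from by linarith]; ring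
      have hc2' : Real.cos ξ2 = -1 - Real.cos ξ1 := by linarith
      have e : Real.sin ξ1 ^ 2 + (-1 - Real.cos ξ1) ^ 2 = 1 := by
        rw [← hc2', ← hsq]; exact p2
      have hc1 : Real.cos ξ1 = -(1/2) := by nlinarith [p1, e]
      have hc2 : Real.cos ξ2 = -(1/2) := by linarith
      have e1 := cos_eq_neg_half' h1 hc1
      have e2 := cos_eq_neg_half' h2 hc2
      have hs23 : Real.sin (2 * Real.pi / 3) > 0 := by
        rw [sin_two_pi_div_three']; positivity
      rcases e1 with e1 | e1 <;> rcases e2 with e2 | e2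
      · exfalso; rw [e1, e2] at hs; linarith
      · exact Or.inl ⟨e1, e2⟩
      · exact Or.inr ⟨e1, e2⟩
      · exfalso; rw [e1, e2, Real.sin_neg] at hs; linarith
    · rintro (⟨e1, e2⟩ | ⟨e1, e2⟩) <;> subst e1 <;> subst e2 <;>
        rw [Real.cos_neg, Real.sin_neg, cos_two_pi_div_three'] <;>
        constructor <;> ring
  refine ⟨hmain, eta_pos, eta_neg, ?_⟩
  intro ξ1 ξ2 h1 h2 ⟨hw, he⟩
  rcases (hmain ξ1 ξ2 h1 h2).mp hw with ⟨e1, e2⟩ | ⟨e1, e2⟩ <;> subst e1 <;> subst e2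
  · rw [eta_pos] at he; linarith
  · rw [eta_neg] at he; linarith
end
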